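/- If X, Y and Z are half-synchronized subshifts with X = Y × Z, then the Fischer graph of X equals the tensor product of the Fischer graphs of Y and Z: F_X = F_Y × F_Z. -/

import Mathlib

namespace Paper

variable {A B C : Type*}

def shiftMap (x : ℤ → A) : ℤ → A := fun i => x (i + 1)

def shiftInvMap (x : ℤ → A) : ℤ → A := fun i => x (i - 1)

/-- A subshift: nonempty, shift-invariant (both directions), and closed
(expressed combinatorially: any configuration all of whose central patterns
are approximated by members is a member). -/
def IsSubshift (X : Set (ℤ → A)) : Prop :=
  X.Nonempty ∧ (∀ x ∈ X, shiftMap x ∈ X) ∧ (∀ x ∈ X, shiftInvMap x ∈ X) ∧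
  ∀ x : ℤ → A, (∀ n : ℕ, ∃ y ∈ X, ∀ i : ℤ, |i| ≤ (n : ℤ) → y i = x i) → x ∈ X

/-- The word `x[i, i+k-1]`. -/
def cfgWord (x : ℤ → A) (i : ℤ) (k : ℕ) : List A :=
  List.ofFn (fun t : Fin k => x (i + ((t : ℕ) : ℤ)))

/-- The language of a set of configurations. -/
def lang (X : Set (ℤ → A)) : Set (List A) := {w | ∃ x ∈ X, ∃ i : ℤ, cfgWord x i w.length = w}

def TransitiveShift (X : Set (ℤ → A)) : Prop :=
  ∀ u ∈ lang X, ∀ v ∈ lang X, ∃ w : List A, u ++ w ++ v ∈ lang X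

/-- Left ray of a configuration: `leftRay x n = x (-1-n)`. -/
def leftRay (x : ℤ → A) : ℕ → A := fun n => x (-1 - (n : ℤ))

def rightRay (x : ℤ → A) : ℕ → A := fun n => x (n : ℤ)

def LeftRays (X : Set (ℤ → A)) : Set (ℕ → A) := leftRay '' X

def RightRays (X : Set (ℤ → A)) : Set (ℕ → A) := rightRay '' X

/-- Glue a left ray and a right ray into a configuration. -/
def glue (l r : ℕ → A) : ℤ → A := fun i => if 0 ≤ i then r i.toNat else l (-1 - i).toNat

/-- Follower set of a left-infinite sequence. -/
def foll (X : Set (ℤ → A)) (l : ℕ → A) : Set (ℕ → A) := {r | glue l r ∈ X}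

def wordThen (w : List A) (r : ℕ → A) : ℕ → A :=
  fun n => if h : n < w.length then w.get ⟨n, h⟩ else r (n - w.length)

/-- Follower set of a word. -/
def follW (X : Set (ℤ → A)) (w : List A) : Set (ℕ → A) := {r | wordThen w r ∈ RightRays X}

def occursInLeft (l : ℕ → A) (w : List A) : Prop :=
  ∃ j : ℕ, ∀ k : Fin w.length, l (j + (w.length - 1 - (k : ℕ))) = w.get k

/-- The language of a left-infinite sequence. -/
def langL (l : ℕ → A) : Set (List A) := {w | occursInLeft l w}

/-- The left ray `l` ends with the word `w`. -/
def raySuffix (l : ℕ → A) (w : List A) : Prop :=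
  ∀ k : Fin w.length, l (w.length - 1 - (k : ℕ)) = w.get k

def HalfSyncWord (X : Set (ℤ → A)) (w : List A) : Prop :=
  w ∈ lang X ∧ ∃ l ∈ LeftRays X, raySuffix l w ∧ langL l = lang X ∧ foll X l = follW X w

def HalfSynchronized (X : Set (ℤ → A)) : Prop := TransitiveShift X ∧ ∃ w, HalfSyncWord X w

def SyncWord (X : Set (ℤ → A)) (w : List A) : Prop :=
  w ∈ lang X ∧ ∀ l ∈ LeftRays X, raySuffix l w → foll X l = follW X w

def Synchronized (X : Set (ℤ → A)) : Prop := TransitiveShift X ∧ ∃ w, SyncWord X w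

/-- Product of two subshifts, over the product alphabet. -/
def prodShift (Y : Set (ℤ → B)) (Z : Set (ℤ → C)) : Set (ℤ → B × C) :=
  {x | (fun i => (x i).1) ∈ Y ∧ (fun i => (x i).2) ∈ Z}

/-- Identification of a pair of sets of right rays with a set of right rays
over the product alphabet. -/
def prodRaySet (S : Set (ℕ → B)) (T : Set (ℕ → C)) : Set (ℕ → B × C) :=
  {r | (fun n => (r n).1) ∈ S ∧ (fun n => (r n).2) ∈ T}

/-- Extend a left ray by one more symbol on the right. -/
def extendRay (l : ℕ → A) (a : A) : ℕ → A := fun n => if n = 0 then a else l (n - 1)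

/-- Edge of the Krieger graph from `u` to `v` labeled `a`. -/
def KEdge (X : Set (ℤ → A)) (u : Set (ℕ → A)) (a : A) (v : Set (ℕ → A)) : Prop :=
  ∃ l ∈ LeftRays X, extendRay l a ∈ LeftRays X ∧ u = foll X l ∧ v = foll X (extendRay l a)

def KStep (X : Set (ℤ → A)) (u v : Set (ℕ → A)) : Prop := ∃ a, KEdge X u a v

/-- Existence of a finite path in the Krieger graph. -/
def KReach (X : Set (ℤ → A)) : Set (ℕ → A) → Set (ℕ → A) → Prop :=
  Relation.ReflTransGen (KStep X)

def KVertex (X : Set (ℤ → A)) (v : Set (ℕ → A)) : Prop := ∃ l ∈ LeftRays X, v = foll X l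

/-- A subshift is sofic iff it has finitely many follower sets. -/
def Sofic (X : Set (ℤ → A)) : Prop := {v : Set (ℕ → A) | KVertex X v}.Finite

/-- Vertex of the Fischer graph (w.r.t. half-synchronizing word `w`): a vertex of the
Krieger graph in the maximal strongly connected subgraph containing `foll w`. -/
def FVertex (X : Set (ℤ → A)) (w : List A) (v : Set (ℕ → A)) : Prop :=
  KVertex X v ∧ KReach X (follW X w) v ∧ KReach X v (follW X w)

/-- Directed (multi)graph with vertex type `V` and edge type `E`. -/
structure DiGraph (V : Type*) (E : Type*) where
  ini : E → V
  ter : E → V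

variable {V E V' E' : Type*}

/-- Bi-infinite path on a graph. -/
def BiPath (G : DiGraph V E) (x : ℤ → E) : Prop := ∀ i : ℤ, G.ter (x i) = G.ini (x (i + 1))

/-- `p` is a finite path of `m+1` edges. -/
def FinPath (G : DiGraph V E) (m : ℕ) (p : Fin (m + 1) → E) : Prop :=
  ∀ k : Fin m, G.ter (p k.castSucc) = G.ini (p k.succ)

/-- The subpath `x[i, i+n]` of a bi-infinite path is a shortest path between its endpoints. -/
def GeodesicSeg (G : DiGraph V E) (x : ℤ → E) (i : ℤ) (n : ℕ) : Prop :=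
  ∀ (m : ℕ) (p : Fin (m + 1) → E), FinPath G m p →
    G.ini (p 0) = G.ini (x i) → G.ter (p (Fin.last m)) = G.ter (x (i + (n : ℤ))) → n ≤ m

def EvGeodesic (G : DiGraph V E) (x : ℤ → E) : Prop :=
  ∃ i₀ : ℤ, ∀ i : ℤ, i₀ ≤ i → ∀ n : ℕ, GeodesicSeg G x i n

/-- Strictly proximal pair of bi-infinite paths. -/
def StrictProxPair (x y : ℤ → E) : Prop :=
  (∀ n : ℕ, ∃ i : ℕ, ∀ k : ℕ, k ≤ n → x ((i : ℤ) + (k : ℤ)) = y ((i : ℤ) + (k : ℤ))) ∧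
  ∀ N : ℕ, ∃ i : ℕ, N ≤ i ∧ x ((i : ℕ) : ℤ) ≠ y ((i : ℕ) : ℤ)

def HasEvGeoProxPair (G : DiGraph V E) : Prop :=
  ∃ x y : ℤ → E, BiPath G x ∧ BiPath G y ∧ EvGeodesic G x ∧ EvGeodesic G y ∧ StrictProxPair x y

/-- Edges of the Fischer graph: Krieger edges between Fischer vertices. -/
def FischerE (X : Set (ℤ → A)) (w : List A) : Type _ :=
  {t : Set (ℕ → A) × A × Set (ℕ → A) //
    FVertex X w t.1 ∧ FVertex X w t.2.2 ∧ KEdge X t.1 t.2.1 t.2.2}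

def FischerGraph (X : Set (ℤ → A)) (w : List A) : DiGraph (Set (ℕ → A)) (FischerE X w) :=
  ⟨fun e => e.1.1, fun e => e.1.2.2⟩

def SlidingBlockCode (X : Set (ℤ → A)) (F : (ℤ → A) → (ℤ → B)) : Prop :=
  ∃ (r : ℕ) (f : (Fin (2 * r + 1) → A) → B),
    ∀ x ∈ X, ∀ i : ℤ, F x i = f (fun k => x (i + ((k : ℕ) : ℤ) - (r : ℤ)))

def ShiftConjugate (X : Set (ℤ → A)) (Y : Set (ℤ → B)) : Prop :=
  ∃ F : (ℤ → A) → (ℤ → B), SlidingBlockCode X F ∧ Set.InjOn F X ∧ F '' X = Y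

def DirectPrime (X : Set (ℤ → A)) : Prop :=
  ∀ (B C : Type) (_ : Finite B) (_ : Finite C) (Y : Set (ℤ → B)) (Z : Set (ℤ → C)),
    IsSubshift Y → IsSubshift Z → ShiftConjugate X (prodShift Y Z) →
    (∃ y, Y = {y}) ∨ (∃ z, Z = {z})

/-!
Follower sets of paired left rays are products of follower sets, so a Krieger edge of
`X = Y × Z` is exactly a pair of Krieger edges of `Y` and `Z`. A vertex `v` of `K_X` lies in the
Fischer graph iff `v = u⁻¹ foll(w)` for some word `u` and some word leads from `v` back to
`foll(w)`; projecting gives one direction. For the converse the component words in `Y` and `Z`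
have to be brought to equal length, which is done with cycles at `foll(w₁)` and `foll(w₂)` of
prescribed length difference. These come from the half-synchronizing ray `l` of `X`: its language
is all of `L(X)`, so it contains its own two coordinate tails at any relative offset, and between
two occurrences of `w₁` in the first coordinate the follower set returns to `foll(w₁)`.
-/

section General

variable {X : Set (ℤ → A)}

lemma IsSubshift.shift_mem (hX : IsSubshift X) {x : ℤ → A} (hx : x ∈ X) (i : ℤ) :
    (fun n => x (n + i)) ∈ X := by
  induction i with
  | zero => simpa using hx
  | succ i ih =>
    convert hX.2.1 _ ih using 2 with n
    simp only [shiftMap]; congr 1; ring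
  | pred i ih =>
    convert hX.2.2.1 _ ih using 2 with n
    simp only [shiftInvMap]; congr 1; ring

lemma IsSubshift.shift_mem_iff (hX : IsSubshift X) {x : ℤ → A} (i : ℤ) :
    (fun n => x (n + i)) ∈ X ↔ x ∈ X :=
  ⟨fun h => by simpa using hX.shift_mem h (-i), fun h => hX.shift_mem h i⟩

lemma mem_lang {x : ℤ → A} (hx : x ∈ X) (i : ℤ) (k : ℕ) : cfgWord x i k ∈ lang X :=
  ⟨x, hx, i, by simp [cfgWord]⟩

lemma wordThen_append (u v : List A) (r : ℕ → A) :
    wordThen (u ++ v) r = wordThen u (wordThen v r) := by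
  funext n
  simp only [wordThen, List.length_append, List.get_eq_getElem]
  by_cases h₁ : n < u.length
  · rw [dif_pos (by omega), dif_pos h₁, List.getElem_append_left h₁]
  · by_cases h₂ : n < u.length + v.length
    · rw [dif_pos h₂, dif_neg h₁, dif_pos (by omega), List.getElem_append_right (by omega)]
    · rw [dif_neg h₂, dif_neg h₁, dif_neg (by omega), Nat.sub_add_eq]

lemma wordThen_nil (r : ℕ → A) : wordThen [] r = r := by
  funext n; simp [wordThen]

lemma wordThen_add_length (u : List A) (r : ℕ → A) (n : ℕ) :
    wordThen u r (n + u.length) = r n := by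
  simp [wordThen]

/-- For `S = foll X l` this is the follower set of the left ray `l u`. -/
def leftQuot (S : Set (ℕ → A)) (u : List A) : Set (ℕ → A) := {r | wordThen u r ∈ S}

lemma leftQuot_nil (S : Set (ℕ → A)) : leftQuot S [] = S := by
  ext r; simp [leftQuot, wordThen_nil]

lemma leftQuot_append (S : Set (ℕ → A)) (u v : List A) :
    leftQuot S (u ++ v) = leftQuot (leftQuot S u) v := by
  ext r; simp [leftQuot, wordThen_append]

lemma nonempty_of_leftQuot {S : Set (ℕ → A)} {u : List A} (h : (leftQuot S u).Nonempty) :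
    S.Nonempty :=
  let ⟨_, hr⟩ := h; ⟨_, hr⟩

lemma follW_append (u v : List A) : follW X (u ++ v) = leftQuot (follW X u) v :=
  leftQuot_append _ u v

lemma mem_leftRays_iff {l : ℕ → A} : l ∈ LeftRays X ↔ (foll X l).Nonempty := by
  constructor
  · rintro ⟨x, hx, rfl⟩
    refine ⟨rightRay x, show glue _ _ ∈ X from ?_⟩
    convert hx using 1
    funext i
    simp only [glue, leftRay, rightRay]
    split_ifs <;> congr 1 <;> omega
  · rintro ⟨r, hr⟩
    refine ⟨glue l r, hr, funext fun n => ?_⟩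
    simp only [glue, leftRay]
    rw [if_neg (by omega)]
    congr 1; omega

lemma KVertex.nonempty {v : Set (ℕ → A)} (h : KVertex X v) : v.Nonempty := by
  obtain ⟨l, hl, rfl⟩ := h
  exact mem_leftRays_iff.1 hl

lemma KEdge.nonempty {u v : Set (ℕ → A)} {a : A} (h : KEdge X u a v) :
    u.Nonempty ∧ v.Nonempty := by
  obtain ⟨l, hl, hla, rfl, rfl⟩ := h
  exact ⟨mem_leftRays_iff.1 hl, mem_leftRays_iff.1 hla⟩

lemma glue_extendRay (l : ℕ → A) (a : A) (r : ℕ → A) :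
    glue (extendRay l a) r = fun i => glue l (wordThen [a] r) (i + 1) := by
  funext i
  simp only [glue, extendRay, wordThen, List.length_singleton]
  rcases lt_trichotomy i (-1) with h | rfl | h
  · rw [if_neg (by omega), if_neg (by omega), if_neg (by omega)]
    congr 1; omega
  · simp
  · rw [if_pos (by omega), if_pos (by omega), dif_neg (by omega)]
    congr 1; omega

lemma foll_extendRay (hX : IsSubshift X) (l : ℕ → A) (a : A) :
    foll X (extendRay l a) = leftQuot (foll X l) [a] := by
  ext r
  show glue _ r ∈ X ↔ glue l (wordThen [a] r) ∈ X
  rw [glue_extendRay, hX.shift_mem_iff]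

lemma kReach_leftQuot (hX : IsSubshift X) (l : ℕ → A) (u : List A)
    (hne : (leftQuot (foll X l) u).Nonempty) :
    KReach X (foll X l) (leftQuot (foll X l) u) := by
  induction u generalizing l with
  | nil => rw [leftQuot_nil]; exact Relation.ReflTransGen.refl
  | cons a u ih =>
    have hcons : leftQuot (foll X l) (a :: u) = leftQuot (foll X (extendRay l a)) u := by
      rw [foll_extendRay hX, ← leftQuot_append]; rfl
    rw [hcons] at hne ⊢
    have hla : (foll X (extendRay l a)).Nonempty := nonempty_of_leftQuot hne
    have hl : (foll X l).Nonempty := nonempty_of_leftQuot (foll_extendRay hX l a ▸ hla)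
    refine Relation.ReflTransGen.head ⟨a, l, ?_, ?_, rfl, rfl⟩ (ih _ hne)
    · exact mem_leftRays_iff.2 hl
    · exact mem_leftRays_iff.2 hla

lemma exists_leftQuot_of_kReach (hX : IsSubshift X) {s v : Set (ℕ → A)} (h : KReach X s v) :
    ∃ u, v = leftQuot s u := by
  induction h with
  | refl => exact ⟨[], (leftQuot_nil s).symm⟩
  | tail _ hstep ih =>
    obtain ⟨u, rfl⟩ := ih
    obtain ⟨a, l, -, -, hu, hv⟩ := hstep
    exact ⟨u ++ [a], by rw [hv, foll_extendRay hX, ← hu, leftQuot_append]⟩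

lemma fVertex_iff (hX : IsSubshift X) {w : List A} {l : ℕ → A} (hl : l ∈ LeftRays X)
    (hfoll : foll X l = follW X w) {v : Set (ℕ → A)} :
    FVertex X w v ↔
      KVertex X v ∧ (∃ u, v = leftQuot (follW X w) u) ∧ ∃ t, leftQuot v t = follW X w := by
  constructor
  · rintro ⟨hv, hto, hfrom⟩
    obtain ⟨t, ht⟩ := exists_leftQuot_of_kReach hX hfrom
    exact ⟨hv, exists_leftQuot_of_kReach hX hto, t, ht.symm⟩
  · rintro ⟨⟨m, hm, rfl⟩, ⟨u, hu⟩, t, ht⟩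
    refine ⟨⟨m, hm, rfl⟩, ?_, ?_⟩
    · have hne := mem_leftRays_iff.1 hm
      rw [hu, ← hfoll] at hne ⊢
      exact kReach_leftQuot hX l u hne
    · have hne := mem_leftRays_iff.1 hl
      rw [hfoll, ← ht] at hne
      rw [← ht]
      exact kReach_leftQuot hX m t hne

/-- The last `n` letters of the left ray `l`, in reading order. -/
def rayEnd (l : ℕ → A) (n : ℕ) : List A := List.ofFn fun k : Fin n => l (n - 1 - k)

@[simp]
lemma rayEnd_length (l : ℕ → A) (n : ℕ) : (rayEnd l n).length = n := List.length_ofFn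

lemma getElem_rayEnd (l : ℕ → A) {n k : ℕ} (hk : k < (rayEnd l n).length) :
    (rayEnd l n)[k] = l (n - 1 - k) := List.getElem_ofFn ..

lemma rayEnd_add (l : ℕ → A) (m n : ℕ) :
    rayEnd l (m + n) = rayEnd (fun k => l (k + n)) m ++ rayEnd l n := by
  refine List.ext_getElem (by simp) fun k h₁ _ => ?_
  rw [getElem_rayEnd]
  by_cases hk : k < m
  · rw [List.getElem_append_left (by simpa using hk), getElem_rayEnd]
    congr 1; omega
  · rw [List.getElem_append_right (by simpa using hk), getElem_rayEnd]
    simp only [rayEnd_length] at h₁ ⊢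
    congr 1; omega

lemma rayEnd_eq_rayEnd_iff {l l' : ℕ → A} {n : ℕ} :
    rayEnd l n = rayEnd l' n ↔ ∀ k < n, l k = l' k := by
  rw [rayEnd, rayEnd, List.ofFn_inj, funext_iff]
  refine ⟨fun h k hk => ?_, fun h k => h _ (by omega)⟩
  simpa [show n - 1 - (n - 1 - k) = k by omega] using h ⟨n - 1 - k, by omega⟩

lemma raySuffix_iff_rayEnd {l : ℕ → A} {w : List A} : raySuffix l w ↔ rayEnd l w.length = w := by
  simp [rayEnd, raySuffix, List.ext_get_iff, Fin.forall_iff]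

lemma raySuffix_congr {l l' : ℕ → A} {w : List A} (h : ∀ k < w.length, l k = l' k)
    (hl : raySuffix l w) : raySuffix l' w := by
  rw [raySuffix_iff_rayEnd] at hl ⊢
  rwa [← rayEnd_eq_rayEnd_iff.2 h]

lemma occursInLeft_iff {l : ℕ → A} {w : List A} :
    occursInLeft l w ↔ ∃ j, raySuffix (fun k => l (k + j)) w := by
  simp only [occursInLeft, raySuffix, add_comm]

lemma rayEnd_leftRay (x : ℤ → A) (n : ℕ) : rayEnd (leftRay x) n = cfgWord x (-n) n := by
  simp only [rayEnd, cfgWord, leftRay]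
  congr 1; funext k; congr 1; omega

lemma foll_subset_follW_rayEnd (hX : IsSubshift X) (l : ℕ → A) (n : ℕ) :
    foll X l ⊆ follW X (rayEnd l n) := by
  intro r hr
  refine ⟨_, hX.shift_mem hr (-n), funext fun k => ?_⟩
  simp only [rightRay, glue, wordThen, List.get_eq_getElem]
  by_cases hk : k < n
  · rw [if_neg (by omega), dif_pos (by simpa using hk), getElem_rayEnd]
    congr 1; omega
  · rw [if_pos (by omega), dif_neg (by simpa using hk)]
    congr 1; simp; omega

lemma follW_append_subset (hX : IsSubshift X) (v u : List A) : follW X (v ++ u) ⊆ follW X u := by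
  rintro r ⟨x, hx, hxr⟩
  refine ⟨_, hX.shift_mem hx v.length, funext fun k => ?_⟩
  rw [wordThen_append] at hxr
  simpa [rightRay, wordThen_add_length] using congrFun hxr (k + v.length)

/-- The follower set of a suffix of `l` that contains `w` is squeezed between `foll X l` and
`follW X w`, which agree; so the letters of `l` after an occurrence of `w` lead from `follW X w`
back to itself. -/
lemma leftQuot_follW_rayEnd (hX : IsSubshift X) {l : ℕ → A} {w : List A} {j : ℕ}
    (hsfx : raySuffix l w) (hfoll : foll X l = follW X w)
    (hocc : raySuffix (fun k => l (k + j)) w) :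
    leftQuot (follW X w) (rayEnd l j) = follW X w := by
  have hsplit : rayEnd l (w.length + j) = w ++ rayEnd l j := by
    rw [rayEnd_add, raySuffix_iff_rayEnd.1 hocc]
  have hsplit' : rayEnd l (j + w.length) = rayEnd (fun k => l (k + w.length)) j ++ w := by
    rw [rayEnd_add, raySuffix_iff_rayEnd.1 hsfx]
  rw [← follW_append, ← hsplit]
  apply subset_antisymm
  · rw [add_comm, hsplit']
    exact follW_append_subset hX _ _
  · rw [← hfoll]
    exact foll_subset_follW_rayEnd hX l _

end General

section LetterMap

variable (f : A → B)

lemma glue_map (l r : ℕ → A) :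
    glue (fun n => f (l n)) (fun n => f (r n)) = fun i => f (glue l r i) := by
  funext i; simp only [glue, apply_ite f]

lemma wordThen_map (u : List A) (r : ℕ → A) :
    wordThen (u.map f) (fun n => f (r n)) = fun n => f (wordThen u r n) := by
  funext n; simp only [wordThen, List.length_map, List.get_eq_getElem, List.getElem_map,
    apply_dite f]

lemma extendRay_map (l : ℕ → A) (a : A) :
    extendRay (fun n => f (l n)) (f a) = fun n => f (extendRay l a n) := by
  funext n; simp only [extendRay, apply_ite f]

lemma raySuffix_map {l : ℕ → A} {w : List A} (h : raySuffix l w) :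
    raySuffix (fun n => f (l n)) (w.map f) := by
  intro k
  have hk := h ⟨k, by simpa using k.2⟩
  simp only [List.get_eq_getElem, List.getElem_map, List.length_map] at hk ⊢
  rw [hk]

end LetterMap

section Product

variable {Y : Set (ℤ → B)} {Z : Set (ℤ → C)}

lemma prodShift_isSubshift (hY : IsSubshift Y) (hZ : IsSubshift Z) :
    IsSubshift (prodShift Y Z) := by
  obtain ⟨⟨y, hy⟩, hYf, hYb, hYc⟩ := hY
  obtain ⟨⟨z, hz⟩, hZf, hZb, hZc⟩ := hZ
  refine ⟨⟨fun i => (y i, z i), hy, hz⟩, fun x hx => ⟨hYf _ hx.1, hZf _ hx.2⟩,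
    fun x hx => ⟨hYb _ hx.1, hZb _ hx.2⟩, fun x hx => ⟨hYc _ fun n => ?_, hZc _ fun n => ?_⟩⟩
  · obtain ⟨x', hx', hagree⟩ := hx n
    exact ⟨_, hx'.1, fun i hi => congrArg Prod.fst (hagree i hi)⟩
  · obtain ⟨x', hx', hagree⟩ := hx n
    exact ⟨_, hx'.2, fun i hi => congrArg Prod.snd (hagree i hi)⟩

lemma prodRaySet_eq_preimage (S : Set (ℕ → B)) (T : Set (ℕ → C)) :
    prodRaySet S T = Equiv.arrowProdEquivProdArrow ℕ _ _ ⁻¹' S ×ˢ T := rfl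

lemma prodRaySet_nonempty_iff {S : Set (ℕ → B)} {T : Set (ℕ → C)} :
    (prodRaySet S T).Nonempty ↔ S.Nonempty ∧ T.Nonempty := by
  rw [prodRaySet_eq_preimage, (Equiv.surjective _).nonempty_preimage, Set.prod_nonempty_iff]

lemma prodRaySet_inj {S S' : Set (ℕ → B)} {T T' : Set (ℕ → C)}
    (h : (prodRaySet S T).Nonempty) : prodRaySet S T = prodRaySet S' T' ↔ S = S' ∧ T = T' := by
  rw [prodRaySet_nonempty_iff, ← Set.prod_nonempty_iff] at h
  simp only [prodRaySet_eq_preimage, (Equiv.surjective _).preimage_injective.eq_iff,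
    Set.prod_eq_prod_iff_of_nonempty h]

lemma foll_prodShift (l : ℕ → B × C) :
    foll (prodShift Y Z) l = prodRaySet (foll Y fun n => (l n).1) (foll Z fun n => (l n).2) := by
  ext r
  simp only [foll, prodRaySet, Set.mem_ofPred_eq, glue_map]
  rfl

lemma rightRays_prodShift :
    RightRays (prodShift Y Z) = prodRaySet (RightRays Y) (RightRays Z) := by
  ext r
  constructor
  · rintro ⟨x, ⟨h₁, h₂⟩, rfl⟩
    exact ⟨⟨_, h₁, rfl⟩, ⟨_, h₂, rfl⟩⟩
  · rintro ⟨⟨y, hy, hyr⟩, ⟨z, hz, hzr⟩⟩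
    exact ⟨fun i => (y i, z i), ⟨hy, hz⟩,
      funext fun n => Prod.ext (congrFun hyr n) (congrFun hzr n)⟩

lemma leftQuot_prodRaySet (S : Set (ℕ → B)) (T : Set (ℕ → C)) (u : List (B × C)) :
    leftQuot (prodRaySet S T) u =
      prodRaySet (leftQuot S (u.map Prod.fst)) (leftQuot T (u.map Prod.snd)) := by
  ext r
  simp only [leftQuot, prodRaySet, Set.mem_ofPred_eq, wordThen_map]

lemma leftQuot_prodRaySet_zip (S : Set (ℕ → B)) (T : Set (ℕ → C)) {u₁ : List B} {u₂ : List C}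
    (h : u₁.length = u₂.length) :
    leftQuot (prodRaySet S T) (u₁.zip u₂) = prodRaySet (leftQuot S u₁) (leftQuot T u₂) := by
  rw [leftQuot_prodRaySet, List.map_fst_zip h.le, List.map_snd_zip h.ge]

lemma follW_prodShift (u : List (B × C)) :
    follW (prodShift Y Z) u = prodRaySet (follW Y (u.map Prod.fst)) (follW Z (u.map Prod.snd)) := by
  change leftQuot (RightRays (prodShift Y Z)) u = _
  rw [rightRays_prodShift, leftQuot_prodRaySet]
  rfl

lemma mem_leftRays_prodShift_iff {l : ℕ → B × C} :
    l ∈ LeftRays (prodShift Y Z) ↔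
      (fun n => (l n).1) ∈ LeftRays Y ∧ (fun n => (l n).2) ∈ LeftRays Z := by
  simp only [mem_leftRays_iff, foll_prodShift, prodRaySet_nonempty_iff]

lemma kVertex_prodShift_iff {v : Set (ℕ → B × C)} :
    KVertex (prodShift Y Z) v ↔
      ∃ v₁ v₂, KVertex Y v₁ ∧ KVertex Z v₂ ∧ v = prodRaySet v₁ v₂ := by
  constructor
  · rintro ⟨l, hl, rfl⟩
    obtain ⟨hl₁, hl₂⟩ := mem_leftRays_prodShift_iff.1 hl
    exact ⟨_, _, ⟨_, hl₁, rfl⟩, ⟨_, hl₂, rfl⟩, foll_prodShift l⟩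
  · rintro ⟨_, _, ⟨l₁, hl₁, rfl⟩, ⟨l₂, hl₂, rfl⟩, rfl⟩
    exact ⟨fun n => (l₁ n, l₂ n), mem_leftRays_prodShift_iff.2 ⟨hl₁, hl₂⟩,
      (foll_prodShift (Y := Y) (Z := Z) fun n => (l₁ n, l₂ n)).symm⟩

lemma kEdge_prodShift_iff {u v : Set (ℕ → B × C)} {a : B × C} :
    KEdge (prodShift Y Z) u a v ↔
      ∃ u₁ v₁ u₂ v₂, KEdge Y u₁ a.1 v₁ ∧ KEdge Z u₂ a.2 v₂ ∧
        u = prodRaySet u₁ u₂ ∧ v = prodRaySet v₁ v₂ := by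
  constructor
  · rintro ⟨l, hl, hla, rfl, rfl⟩
    obtain ⟨hl₁, hl₂⟩ := mem_leftRays_prodShift_iff.1 hl
    obtain ⟨hla₁, hla₂⟩ := mem_leftRays_prodShift_iff.1 hla
    rw [← extendRay_map] at hla₁ hla₂
    refine ⟨_, _, _, _, ⟨_, hl₁, hla₁, rfl, rfl⟩, ⟨_, hl₂, hla₂, rfl, rfl⟩,
      foll_prodShift l, ?_⟩
    rw [foll_prodShift, ← extendRay_map, ← extendRay_map]
  · rintro ⟨_, _, _, _, ⟨l₁, hl₁, hla₁, rfl, rfl⟩, ⟨l₂, hl₂, hla₂, rfl, rfl⟩, rfl, rfl⟩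
    have hext : extendRay (fun n => (l₁ n, l₂ n)) a =
        fun n => (extendRay l₁ a.1 n, extendRay l₂ a.2 n) := by
      funext n; by_cases hn : n = 0 <;> simp [extendRay, hn]
    refine ⟨fun n => (l₁ n, l₂ n), mem_leftRays_prodShift_iff.2 ⟨hl₁, hl₂⟩, ?_,
      (foll_prodShift (Y := Y) (Z := Z) fun n => (l₁ n, l₂ n)).symm, ?_⟩
    · rw [hext]; exact mem_leftRays_prodShift_iff.2 ⟨hla₁, hla₂⟩
    · rw [hext, foll_prodShift]

variable {w : List (B × C)}

lemma HalfSyncWord.exists_ray_prodShift (hw : HalfSyncWord (prodShift Y Z) w) :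
    ∃ l ∈ LeftRays (prodShift Y Z), langL l = lang (prodShift Y Z) ∧
      raySuffix (fun n => (l n).1) (w.map Prod.fst) ∧
      raySuffix (fun n => (l n).2) (w.map Prod.snd) ∧
      foll Y (fun n => (l n).1) = follW Y (w.map Prod.fst) ∧
      foll Z (fun n => (l n).2) = follW Z (w.map Prod.snd) := by
  obtain ⟨-, l, hl, hsfx, hlang, hfoll⟩ := hw
  rw [foll_prodShift, follW_prodShift] at hfoll
  have hne : (prodRaySet (foll Y fun n => (l n).1) (foll Z fun n => (l n).2)).Nonempty := by
    rw [← foll_prodShift]; exact mem_leftRays_iff.1 hl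
  exact ⟨l, hl, hlang, raySuffix_map _ hsfx, raySuffix_map _ hsfx, (prodRaySet_inj hne).1 hfoll⟩

/-- Since `l` sees every word of the product, it sees the pair of its own two coordinate tails
placed with an arbitrary relative offset. -/
lemma exists_shift_agree (hY : IsSubshift Y) (hZ : IsSubshift Z) {l : ℕ → B × C}
    (hl : l ∈ LeftRays (prodShift Y Z)) (hlang : langL l = lang (prodShift Y Z))
    (m₁ m₂ n : ℕ) :
    ∃ j, ∀ k < n, (l (k + (m₁ + j))).1 = (l k).1 ∧ (l (k + (m₂ + j))).2 = (l k).2 := by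
  obtain ⟨x, ⟨hx₁, hx₂⟩, rfl⟩ := hl
  let x' : ℤ → B × C := fun i => ((x (i + m₁)).1, (x (i + m₂)).2)
  have hx' : x' ∈ prodShift Y Z := ⟨hY.shift_mem hx₁ m₁, hZ.shift_mem hx₂ m₂⟩
  have hocc : rayEnd (leftRay x') (n + m₁ + m₂) ∈ langL (leftRay x) := by
    rw [hlang, rayEnd_leftRay]; exact mem_lang hx' _ _
  obtain ⟨j, hj⟩ := occursInLeft_iff.1 hocc
  rw [raySuffix_iff_rayEnd, rayEnd_length, rayEnd_eq_rayEnd_iff] at hj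
  refine ⟨j, fun k hk => ⟨?_, ?_⟩⟩
  · have := congrArg Prod.fst (hj (k + m₁) (by omega))
    simp only [leftRay, x'] at this ⊢
    rw [← add_assoc, this]; congr 2; push_cast; ring
  · have := congrArg Prod.snd (hj (k + m₂) (by omega))
    simp only [leftRay, x'] at this ⊢
    rw [← add_assoc, this]; congr 2; push_cast; ring

lemma exists_cycles (hY : IsSubshift Y) (hZ : IsSubshift Z) (hw : HalfSyncWord (prodShift Y Z) w)
    (m₁ m₂ : ℕ) :
    ∃ η₁ η₂, η₁.length + m₁ = η₂.length + m₂ ∧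
      leftQuot (follW Y (w.map Prod.fst)) η₁ = follW Y (w.map Prod.fst) ∧
      leftQuot (follW Z (w.map Prod.snd)) η₂ = follW Z (w.map Prod.snd) := by
  obtain ⟨l, hl, hlang, hsfx₁, hsfx₂, hfoll₁, hfoll₂⟩ := hw.exists_ray_prodShift
  obtain ⟨j, hj⟩ := exists_shift_agree hY hZ hl hlang m₂ m₁ w.length
  refine ⟨rayEnd _ (m₂ + j), rayEnd _ (m₁ + j), by simp; omega,
    leftQuot_follW_rayEnd hY hsfx₁ hfoll₁ (raySuffix_congr ?_ hsfx₁),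
    leftQuot_follW_rayEnd hZ hsfx₂ hfoll₂ (raySuffix_congr ?_ hsfx₂)⟩
  · intro k hk; exact (hj k (by simpa using hk)).1.symm
  · intro k hk; exact (hj k (by simpa using hk)).2.symm

lemma fVertex_prodShift_iff (hY : IsSubshift Y) (hZ : IsSubshift Z)
    (hw : HalfSyncWord (prodShift Y Z) w) {v : Set (ℕ → B × C)} :
    FVertex (prodShift Y Z) w v ↔ ∃ v₁ v₂,
      FVertex Y (w.map Prod.fst) v₁ ∧ FVertex Z (w.map Prod.snd) v₂ ∧ v = prodRaySet v₁ v₂ := by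
  obtain ⟨l, hl, -, -, -, hfoll₁, hfoll₂⟩ := hw.exists_ray_prodShift
  obtain ⟨hl₁, hl₂⟩ := mem_leftRays_prodShift_iff.1 hl
  have hU : (prodRaySet (follW Y (w.map Prod.fst)) (follW Z (w.map Prod.snd))).Nonempty := by
    rw [← hfoll₁, ← hfoll₂, ← foll_prodShift]; exact mem_leftRays_iff.1 hl
  have hX := prodShift_isSubshift hY hZ
  rw [fVertex_iff hX hl (by rw [foll_prodShift, follW_prodShift, hfoll₁, hfoll₂])]
  simp only [fVertex_iff hY hl₁ hfoll₁, fVertex_iff hZ hl₂ hfoll₂, follW_prodShift]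
  constructor
  · rintro ⟨hv, ⟨u, hu⟩, t, ht⟩
    obtain ⟨v₁, v₂, hv₁, hv₂, rfl⟩ := kVertex_prodShift_iff.1 hv
    have hv₁₂ := prodRaySet_nonempty_iff.2 ⟨hv₁.nonempty, hv₂.nonempty⟩
    rw [leftQuot_prodRaySet, prodRaySet_inj hv₁₂] at hu
    rw [leftQuot_prodRaySet, eq_comm, prodRaySet_inj hU] at ht
    exact ⟨v₁, v₂, ⟨hv₁, ⟨_, hu.1⟩, _, ht.1.symm⟩, ⟨hv₂, ⟨_, hu.2⟩, _, ht.2.symm⟩, rfl⟩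
  · rintro ⟨v₁, v₂, ⟨hv₁, ⟨s₁, rfl⟩, t₁, ht₁⟩, ⟨hv₂, ⟨s₂, rfl⟩, t₂, ht₂⟩, rfl⟩
    -- pad the component words with cycles so that they have equal length and can be zipped
    obtain ⟨η₁, η₂, hη, hη₁, hη₂⟩ := exists_cycles hY hZ hw s₁.length s₂.length
    obtain ⟨θ₁, θ₂, hθ, hθ₁, hθ₂⟩ := exists_cycles hY hZ hw t₁.length t₂.length
    refine ⟨kVertex_prodShift_iff.2 ⟨_, _, hv₁, hv₂, rfl⟩, ⟨(η₁ ++ s₁).zip (η₂ ++ s₂), ?_⟩,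
      (t₁ ++ θ₁).zip (t₂ ++ θ₂), ?_⟩
    · rw [leftQuot_prodRaySet_zip _ _ (by simpa using hη), leftQuot_append, leftQuot_append,
        hη₁, hη₂]
    · rw [leftQuot_prodRaySet_zip _ _ (by simp; omega), leftQuot_append, leftQuot_append,
        ht₁, ht₂, hθ₁, hθ₂]

lemma fVertex_prodRaySet_iff (hY : IsSubshift Y) (hZ : IsSubshift Z)
    (hw : HalfSyncWord (prodShift Y Z) w) {S : Set (ℕ → B)} {T : Set (ℕ → C)}
    (hS : S.Nonempty) (hT : T.Nonempty) :
    FVertex (prodShift Y Z) w (prodRaySet S T) ↔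
      FVertex Y (w.map Prod.fst) S ∧ FVertex Z (w.map Prod.snd) T := by
  rw [fVertex_prodShift_iff hY hZ hw]
  constructor
  · rintro ⟨v₁, v₂, hv₁, hv₂, h⟩
    obtain ⟨rfl, rfl⟩ := (prodRaySet_inj (prodRaySet_nonempty_iff.2 ⟨hS, hT⟩)).1 h
    exact ⟨hv₁, hv₂⟩
  · rintro ⟨hS', hT'⟩
    exact ⟨S, T, hS', hT', rfl⟩

end Product

theorem stmt4_general
    (Y : Set (ℤ → B)) (Z : Set (ℤ → C)) (hY : IsSubshift Y) (hZ : IsSubshift Z)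
    (w : List (B × C)) (hw : HalfSyncWord (prodShift Y Z) w) :
    (∀ v : Set (ℕ → B × C), FVertex (prodShift Y Z) w v ↔
        ∃ v₁ v₂, FVertex Y (w.map Prod.fst) v₁ ∧ FVertex Z (w.map Prod.snd) v₂ ∧
          v = prodRaySet v₁ v₂) ∧
    (∀ (u v : Set (ℕ → B × C)) (a : B × C),
        (FVertex (prodShift Y Z) w u ∧ FVertex (prodShift Y Z) w v ∧
          KEdge (prodShift Y Z) u a v) ↔
        ∃ u₁ v₁ u₂ v₂,
          (FVertex Y (w.map Prod.fst) u₁ ∧ FVertex Y (w.map Prod.fst) v₁ ∧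
            KEdge Y u₁ a.1 v₁) ∧
          (FVertex Z (w.map Prod.snd) u₂ ∧ FVertex Z (w.map Prod.snd) v₂ ∧
            KEdge Z u₂ a.2 v₂) ∧
          u = prodRaySet u₁ u₂ ∧ v = prodRaySet v₁ v₂) := by
  refine ⟨fun v => fVertex_prodShift_iff hY hZ hw, fun u v a => ⟨?_, ?_⟩⟩
  · rintro ⟨hu, hv, he⟩
    obtain ⟨u₁, v₁, u₂, v₂, he₁, he₂, rfl, rfl⟩ := kEdge_prodShift_iff.1 he
    rw [fVertex_prodRaySet_iff hY hZ hw he₁.nonempty.1 he₂.nonempty.1] at hu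
    rw [fVertex_prodRaySet_iff hY hZ hw he₁.nonempty.2 he₂.nonempty.2] at hv
    exact ⟨u₁, v₁, u₂, v₂, ⟨hu.1, hv.1, he₁⟩, ⟨hu.2, hv.2, he₂⟩, rfl, rfl⟩
  · rintro ⟨u₁, v₁, u₂, v₂, ⟨hu₁, hv₁, he₁⟩, ⟨hu₂, hv₂, he₂⟩, rfl, rfl⟩
    exact ⟨(fVertex_prodShift_iff hY hZ hw).2 ⟨u₁, u₂, hu₁, hu₂, rfl⟩,
      (fVertex_prodShift_iff hY hZ hw).2 ⟨v₁, v₂, hv₁, hv₂, rfl⟩,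
      kEdge_prodShift_iff.2 ⟨u₁, v₁, u₂, v₂, he₁, he₂, rfl, rfl⟩⟩

theorem stmt4 [Finite B] [Finite C]
    (Y : Set (ℤ → B)) (Z : Set (ℤ → C)) (hY : IsSubshift Y) (hZ : IsSubshift Z)
    (hYh : HalfSynchronized Y) (hZh : HalfSynchronized Z)
    (hXh : HalfSynchronized (prodShift Y Z))
    (w : List (B × C)) (hw : HalfSyncWord (prodShift Y Z) w) :
    (∀ v : Set (ℕ → B × C), FVertex (prodShift Y Z) w v ↔
        ∃ v₁ v₂, FVertex Y (w.map Prod.fst) v₁ ∧ FVertex Z (w.map Prod.snd) v₂ ∧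
          v = prodRaySet v₁ v₂) ∧
    (∀ (u v : Set (ℕ → B × C)) (a : B × C),
        (FVertex (prodShift Y Z) w u ∧ FVertex (prodShift Y Z) w v ∧
          KEdge (prodShift Y Z) u a v) ↔
        ∃ u₁ v₁ u₂ v₂,
          (FVertex Y (w.map Prod.fst) u₁ ∧ FVertex Y (w.map Prod.fst) v₁ ∧
            KEdge Y u₁ a.1 v₁) ∧
          (FVertex Z (w.map Prod.snd) u₂ ∧ FVertex Z (w.map Prod.snd) v₂ ∧
            KEdge Z u₂ a.2 v₂) ∧
          u = prodRaySet u₁ u₂ ∧ v = prodRaySet v₁ v₂) :=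
  stmt4_general Y Z hY hZ w hw

end Paper
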